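/- Let A ∈ ℝ^{n×n}, C ∈ ℝ^{p×n}, and let Ū ∈ St(r,n) satisfy (I_n − ŪŪᵀ)·A·Ū = 0. Then for every T ≥ 0, Ūᵀ·(∫₀ᵀ exp(t·Aᵀ)·Cᵀ·C·exp(t·A) dt)·Ū = ∫₀ᵀ exp(t·(ŪᵀAŪ)ᵀ)·(CŪ)ᵀ·(CŪ)·exp(t·ŪᵀAŪ) dt; that is, the projection by Ū of the finite-horizon observability Gramian of (A, C) equals the observability Gramian of the reduced pair (ŪᵀAŪ, CŪ). -/

import Mathlib

/-!
Write `B = UᵀAU`. The equilibrium condition says exactly `AU = UB`, i.e. `U` intertwines `A`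
and `B`; termwise in the exponential series this gives `exp(tA) U = U exp(tB)`. Hence
`Uᵀ exp(tAᵀ) CᵀC exp(tA) U = (exp(tA) U)ᵀ CᵀC (exp(tA) U) = exp(tBᵀ) (CU)ᵀ (CU) exp(tB)` for
every `t`, and multiplication by constant matrices commutes with the entrywise integral.
-/

open Matrix NormedSpace

namespace Matrix

variable {l m n o : Type*} [Fintype m] [Fintype n]

theorem exp_mul_eq_mul_exp_of_mul_eq [DecidableEq m] [DecidableEq n] {A : Matrix m m ℝ}
    {B : Matrix n n ℝ} {U : Matrix m n ℝ} (h : A * U = U * B) : exp A * U = U * exp B := by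
  -- `exp` is defined topologically, so any norm inducing the product topology may be chosen here.
  let : NormedRing (Matrix m m ℝ) := Matrix.linftyOpNormedRing
  let : NormedAlgebra ℝ (Matrix m m ℝ) := Matrix.linftyOpNormedAlgebra
  let : NormedRing (Matrix n n ℝ) := Matrix.linftyOpNormedRing
  let : NormedAlgebra ℝ (Matrix n n ℝ) := Matrix.linftyOpNormedAlgebra
  have hpow (k : ℕ) : A ^ k * U = U * B ^ k := by
    induction k with
    | zero => simp
    | succ k ih => rw [pow_succ, pow_succ, Matrix.mul_assoc, h, ← Matrix.mul_assoc, ih,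
        Matrix.mul_assoc]
  have hA := (expSeries_summable' (𝕂 := ℝ) A).hasSum.map (mulRightLinearMap m ℝ U)
    (continuous_id.matrix_mul continuous_const)
  have hB := (expSeries_summable' (𝕂 := ℝ) B).hasSum.map (mulLeftLinearMap n ℝ U)
    (continuous_const.matrix_mul continuous_id)
  rw [exp_eq_tsum ℝ, exp_eq_tsum ℝ]
  refine hA.unique (hB.congr_fun fun k ↦ ?_)
  simp only [Function.comp_apply, map_smul, mulRightLinearMap_apply, mulLeftLinearMap_apply, hpow]

theorem continuous_exp_smul [DecidableEq m] (A : Matrix m m ℝ) :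
    Continuous fun t : ℝ ↦ exp (t • A) := by
  let : NormedRing (Matrix m m ℝ) := Matrix.linftyOpNormedRing
  let : NormedAlgebra ℝ (Matrix m m ℝ) := Matrix.linftyOpNormedAlgebra
  let : NormedAlgebra ℚ (Matrix m m ℝ) := NormedAlgebra.restrictScalars ℚ ℝ _
  exact exp_continuous.comp (continuous_id.smul continuous_const)

theorem mul_of_intervalIntegral_mul (P : Matrix l m ℝ) (Q : Matrix n o ℝ) {F : ℝ → Matrix m n ℝ}
    {a b : ℝ} (hF : ∀ i j, IntervalIntegrable (fun t ↦ F t i j) MeasureTheory.volume a b) :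
    P * (of fun i j ↦ ∫ t in a..b, F t i j) * Q = of fun i j ↦ ∫ t in a..b, (P * F t * Q) i j := by
  ext i j
  have hterm (k : n) (k' : m) :
      IntervalIntegrable (fun t ↦ P i k' * F t k' k * Q k j) MeasureTheory.volume a b :=
    ((hF k' k).const_mul _).mul_const _
  simp only [mul_apply, of_apply, Finset.sum_mul]
  rw [intervalIntegral.integral_finsetSum fun k _ ↦ by
    simpa only [Finset.sum_fn] using IntervalIntegrable.sum Finset.univ fun k' _ ↦ hterm k k']
  refine Finset.sum_congr rfl fun k _ ↦ ?_
  rw [intervalIntegral.integral_finsetSum fun k' _ ↦ hterm k k']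
  simp only [intervalIntegral.integral_mul_const, intervalIntegral.integral_const_mul]

end Matrix

section Gramian

variable {n r p : Type*} [Fintype n] [DecidableEq n] [Fintype r] [DecidableEq r] [Fintype p]

noncomputable def observabilityGramian (A : Matrix n n ℝ) (C : Matrix p n ℝ) (T : ℝ) :
    Matrix n n ℝ :=
  of fun i j ↦ ∫ t in (0 : ℝ)..T, (exp (t • Aᵀ) * Cᵀ * C * exp (t • A)) i j

theorem transpose_mul_observabilityGramian_mul_of_mul_eq {A : Matrix n n ℝ} {B : Matrix r r ℝ}
    {U : Matrix n r ℝ} (h : A * U = U * B) (C : Matrix p n ℝ) (T : ℝ) :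
    Uᵀ * observabilityGramian A C T * U = observabilityGramian B (C * U) T := by
  have hexp (t : ℝ) : exp (t • A) * U = U * exp (t • B) :=
    exp_mul_eq_mul_exp_of_mul_eq (by rw [Matrix.smul_mul, h, Matrix.mul_smul])
  have hintegrand (t : ℝ) : Uᵀ * (exp (t • Aᵀ) * Cᵀ * C * exp (t • A)) * U =
      exp (t • Bᵀ) * (C * U)ᵀ * (C * U) * exp (t • B) := by
    simp only [← transpose_smul, exp_transpose]
    calc _ = (exp (t • A) * U)ᵀ * Cᵀ * C * (exp (t • A) * U) := by
          simp only [transpose_mul, Matrix.mul_assoc]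
      _ = _ := by
          rw [hexp]
          simp only [transpose_mul, Matrix.mul_assoc]
  have hcont (i j) : Continuous fun t ↦ (exp (t • Aᵀ) * Cᵀ * C * exp (t • A)) i j :=
    (((continuous_exp_smul Aᵀ).matrix_mul continuous_const).matrix_mul continuous_const
      |>.matrix_mul (continuous_exp_smul A)).matrix_elem i j
  simp only [observabilityGramian]
  rw [mul_of_intervalIntegral_mul _ _ fun i j ↦ (hcont i j).intervalIntegrable 0 T]
  simp only [hintegrand]

end Gramian

theorem projected_observability_gramian
    (n r p : ℕ)
    (A : Matrix (Fin n) (Fin n) ℝ) (C : Matrix (Fin p) (Fin n) ℝ)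
    (Ub : Matrix (Fin n) (Fin r) ℝ)
    (hUbeq : (1 - Ub * Ubᵀ) * A * Ub = 0) :
    ∀ T : ℝ, 0 ≤ T →
      Ubᵀ * (Matrix.of fun i j =>
          ∫ t in (0:ℝ)..T, (exp (t • Aᵀ) * Cᵀ * C * exp (t • A)) i j) * Ub =
        Matrix.of fun i j =>
          ∫ t in (0:ℝ)..T, (exp (t • (Ubᵀ * A * Ub)ᵀ) * (C * Ub)ᵀ * (C * Ub) *
            exp (t • (Ubᵀ * A * Ub))) i j := by
  intro T _
  have hA : A * Ub = Ub * (Ubᵀ * A * Ub) := by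
    rw [Matrix.sub_mul, Matrix.sub_mul, Matrix.one_mul, sub_eq_zero] at hUbeq
    simpa only [Matrix.mul_assoc] using hUbeq
  exact transpose_mul_observabilityGramian_mul_of_mul_eq hA C T
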